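/- arXiv:1106.3836 — 6 statements merged into one kernel-verified Lean document; each statement's English description precedes it below -/
import Mathlib

section
/- If G is a non-locally compact paratopological group and bG is a Hausdorff compactification of G such that the remainder Y = bG \ G does not have the Baire property, then Y is Lindelöf and meager. -/
/-!
A non-locally compact paratopological group has no nonempty open subset of `bG` inside it, so
the remainder `Y` is dense. If `Y` is not Baire, some nonempty open `W ⊆ bG` has meagre trace
`W ∩ Y`, so `bG` contains a nonempty Gδ set inside `G`.

Lindelöf: a point of that Gδ has decreasing closed neighbourhoods `F n` whose intersection lies
in `G`. Translating them along a compact `C ⊆ G` and using joint continuity of multiplication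
puts `C` into a Gδ of `bG` contained in `G`; taking `C` the complement of an open cover of `Y`,
the complement of that Gδ is σ-compact and yields a countable subcover.

Meagre: left translations extend to homeomorphisms of `βG` preserving its remainder, and the
canonical map `βG → bG` is a closed irreducible surjection mapping remainder onto remainder, so
it preserves meagreness under images and preimages. Hence every nonempty open subset of `bG`
contains one with meagre trace on `Y`, and Banach's category theorem makes `Y` meagre in `bG`,
hence in itself as `Y` is dense.
-/

open Set Filter Topology Pointwise

section Meagre

variable {X : Type*} [TopologicalSpace X]

theorem isMeagre_iff_exists_isOpen_dense_nat {s : Set X} :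
    IsMeagre s ↔
      ∃ E : ℕ → Set X, (∀ n, IsOpen (E n)) ∧ (∀ n, Dense (E n)) ∧ ⋂ n, E n ⊆ sᶜ := by
  constructor
  · intro hs
    obtain ⟨S, hSo, hSd, hSc, hSs⟩ := mem_residual_iff.1 hs
    obtain ⟨E, hE⟩ := (hSc.insert univ).exists_eq_range (insert_nonempty univ S)
    have hES : ∀ n, E n ∈ insert univ S := fun n => hE ▸ mem_range_self n
    refine ⟨E, fun n => ?_, fun n => ?_, ?_⟩
    · rcases hES n with h | h
      · exact h ▸ isOpen_univ
      · exact hSo _ h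
    · rcases hES n with h | h
      · exact h ▸ dense_univ
      · exact hSd _ h
    · rw [← sInter_range, ← hE]
      exact (sInter_subset_sInter (subset_insert univ S)).trans hSs
  · rintro ⟨E, hEo, hEd, hEs⟩
    exact mem_of_superset (countable_iInter_mem.2 fun n => residual_of_dense_open (hEo n) (hEd n))
      hEs

theorem exists_isOpen_isMeagre_of_not_baireSpace (h : ¬ BaireSpace X) :
    ∃ U : Set X, IsOpen U ∧ U.Nonempty ∧ IsMeagre U := by
  obtain ⟨E, hEo, hEd, hE⟩ : ∃ E : ℕ → Set X,
      (∀ n, IsOpen (E n)) ∧ (∀ n, Dense (E n)) ∧ ¬ Dense (⋂ n, E n) := by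
    by_contra! hall
    exact h ⟨hall⟩
  obtain ⟨U, hUo, hUne, hUE⟩ : ∃ U, IsOpen U ∧ U.Nonempty ∧ U ∩ ⋂ n, E n = ∅ := by
    simpa [dense_iff_inter_open, not_nonempty_iff_eq_empty] using hE
  refine ⟨U, hUo, hUne, isMeagre_iff_exists_isOpen_dense_nat.2 ⟨E, hEo, hEd, ?_⟩⟩
  rwa [subset_compl_iff_disjoint_left, disjoint_iff_inter_eq_empty]

theorem exists_isOpen_isMeagre_inter_of_not_baireSpace {Y : Set X} (h : ¬ BaireSpace Y) :
    ∃ W : Set X, IsOpen W ∧ (W ∩ Y).Nonempty ∧ IsMeagre (W ∩ Y) := by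
  obtain ⟨U, hUo, hUne, hUm⟩ := exists_isOpen_isMeagre_of_not_baireSpace h
  obtain ⟨W, hWo, rfl⟩ := isOpen_induced_iff.1 hUo
  refine ⟨W, hWo, ?_, ?_⟩ <;> rw [inter_comm, ← Subtype.image_preimage_coe]
  exacts [hUne.image _, hUm.image_val]

theorem Dense.isMeagre_preimage_val {Y : Set X} (hY : Dense Y) {s : Set X} (hs : IsMeagre s) :
    IsMeagre (Subtype.val ⁻¹' s : Set Y) := by
  obtain ⟨E, hEo, hEd, hEs⟩ := isMeagre_iff_exists_isOpen_dense_nat.1 hs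
  refine isMeagre_iff_exists_isOpen_dense_nat.2
    ⟨fun n => Subtype.val ⁻¹' E n, fun n => (hEo n).preimage continuous_subtype_val,
      fun n => ?_, fun y hy => hEs (by simpa using hy)⟩
  rw [Subtype.dense_iff, Subtype.image_preimage_coe,
    (hY.inter_of_isOpen_right (hEd n) (hEo n)).closure_eq]
  exact subset_univ Y

theorem isMeagre_of_pairwiseDisjoint_of_dense_sUnion {s : Set X} {𝒜 : Set (Set X)}
    (h𝒜o : ∀ V ∈ 𝒜, IsOpen V) (h𝒜m : ∀ V ∈ 𝒜, IsMeagre (V ∩ s)) (h𝒜disj : 𝒜.PairwiseDisjoint id)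
    (hD : Dense (⋃₀ 𝒜)) : IsMeagre s := by
  choose! E hEo hEd hEs using fun V hV => isMeagre_iff_exists_isOpen_dense_nat.1 (h𝒜m V hV)
  refine isMeagre_iff_exists_isOpen_dense_nat.2 ⟨fun n => ⋃ V ∈ 𝒜, V ∩ E V n,
    fun n => isOpen_biUnion fun V hV => (h𝒜o V hV).inter (hEo V hV n), fun n => ?_, ?_⟩
  · rw [dense_iff_inter_open]
    intro U hU hUne
    obtain ⟨x, hxU, V, hV, hxV⟩ := hD.inter_open_nonempty U hU hUne
    obtain ⟨y, ⟨hyU, hyV⟩, hyE⟩ :=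
      (hEd V hV n).inter_open_nonempty (U ∩ V) (hU.inter (h𝒜o V hV)) ⟨x, hxU, hxV⟩
    exact ⟨y, hyU, mem_biUnion hV ⟨hyV, hyE⟩⟩
  · intro x hx hxs
    obtain ⟨V, hV, hxV, -⟩ := mem_iUnion₂.1 (mem_iInter.1 hx 0)
    refine hEs V hV (mem_iInter.2 fun n => ?_) ⟨hxV, hxs⟩
    obtain ⟨V', hV', hxV', hxE⟩ := mem_iUnion₂.1 (mem_iInter.1 hx n)
    obtain rfl : V' = V := h𝒜disj.elim hV' hV (not_disjoint_iff.2 ⟨x, hxV', hxV⟩)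
    exact hxE

theorem isMeagre_of_forall_isOpen_exists_subset {s : Set X}
    (h : ∀ U, IsOpen U → U.Nonempty → ∃ V ⊆ U, IsOpen V ∧ V.Nonempty ∧ IsMeagre (V ∩ s)) :
    IsMeagre s := by
  set 𝒲 : Set (Set X) := {V | IsOpen V ∧ V.Nonempty ∧ IsMeagre (V ∩ s)}
  obtain ⟨𝒜, h𝒜⟩ : ∃ 𝒜, Maximal (fun 𝒜 => 𝒜 ⊆ 𝒲 ∧ 𝒜.PairwiseDisjoint id) 𝒜 := by
    refine zorn_subset _ fun c hc hchain => ⟨⋃₀ c, ⟨sUnion_subset fun A hA => (hc hA).1, ?_⟩,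
      fun A hA => subset_sUnion_of_mem hA⟩
    exact (pairwiseDisjoint_sUnion hchain.directedOn).2 fun A hA => (hc hA).2
  obtain ⟨h𝒜𝒲, h𝒜disj⟩ := h𝒜.prop
  refine isMeagre_of_pairwiseDisjoint_of_dense_sUnion (fun V hV => (h𝒜𝒲 hV).1)
    (fun V hV => (h𝒜𝒲 hV).2.2) h𝒜disj ?_
  by_contra hnd
  obtain ⟨V, hVD, hVo, hVne, hVs⟩ := h (closure (⋃₀ 𝒜))ᶜ isClosed_closure.isOpen_compl
    (nonempty_compl.2 fun h' => hnd (dense_iff_closure_eq.2 h'))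
  have hVdisj : ∀ A ∈ 𝒜, Disjoint V A := fun A hA =>
    disjoint_compl_left.mono hVD (subset_closure.trans' (subset_sUnion_of_mem hA))
  have hV𝒜 : V ∈ 𝒜 := h𝒜.2 ⟨insert_subset ⟨hVo, hVne, hVs⟩ h𝒜𝒲,
    h𝒜disj.insert fun A hA _ => hVdisj A hA⟩ (subset_insert V 𝒜) (mem_insert V 𝒜)
  obtain ⟨x, hx⟩ := hVne
  exact hVD hx (subset_closure (subset_sUnion_of_mem hV𝒜 hx))

end Meagre

section IrreducibleMap

variable {X Y : Type*} [TopologicalSpace X] {f : X → Y}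

def IsIrreducibleMap (f : X → Y) : Prop :=
  ∀ F : Set X, IsClosed F → f '' F = univ → F = univ

-- `(f '' Uᶜ)ᶜ` is the small image of `U`: the points whose whole fibre lies in `U`.
theorem IsIrreducibleMap.nonempty_compl_image_compl (hf : IsIrreducibleMap f) {U : Set X}
    (hU : IsOpen U) (hne : U.Nonempty) : (f '' Uᶜ)ᶜ.Nonempty := by
  rw [nonempty_compl]
  exact fun h => hne.ne_empty (compl_univ_iff.1 (hf Uᶜ hU.isClosed_compl h))

variable [TopologicalSpace Y]

theorem IsIrreducibleMap.isMeagre_preimage (hf : IsIrreducibleMap f) (hc : Continuous f)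
    (hcl : IsClosedMap f) (hs : Function.Surjective f) {s : Set Y} (h : IsMeagre s) :
    IsMeagre (f ⁻¹' s) := by
  obtain ⟨E, hEo, hEd, hEs⟩ := isMeagre_iff_exists_isOpen_dense_nat.1 h
  refine isMeagre_iff_exists_isOpen_dense_nat.2
    ⟨fun n => f ⁻¹' E n, fun n => (hEo n).preimage hc, fun n => ?_, ?_⟩
  · rw [dense_iff_inter_open]
    intro V hV hVne
    obtain ⟨y, hyV, hyE⟩ := (hEd n).inter_open_nonempty _
      (hcl _ hV.isClosed_compl).isOpen_compl (hf.nonempty_compl_image_compl hV hVne)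
    obtain ⟨x, rfl⟩ := hs y
    exact ⟨x, by_contra fun hxV => hyV ⟨x, hxV, rfl⟩, hyE⟩
  · rw [← preimage_iInter, ← preimage_compl]
    exact preimage_mono hEs

theorem IsIrreducibleMap.isMeagre_image (hf : IsIrreducibleMap f) (hc : Continuous f)
    (hcl : IsClosedMap f) (hs : Function.Surjective f) {s : Set X} (h : IsMeagre s) :
    IsMeagre (f '' s) := by
  obtain ⟨E, hEo, hEd, hEs⟩ := isMeagre_iff_exists_isOpen_dense_nat.1 h
  refine isMeagre_iff_exists_isOpen_dense_nat.2
    ⟨fun n => (f '' (E n)ᶜ)ᶜ, fun n => (hcl _ (hEo n).isClosed_compl).isOpen_compl,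
      fun n => ?_, ?_⟩
  · rw [dense_iff_inter_open]
    intro V hV hVne
    have hVE : IsOpen (f ⁻¹' V ∩ E n) := (hV.preimage hc).inter (hEo n)
    obtain ⟨y, hy⟩ := hf.nonempty_compl_image_compl hVE <|
      (hEd n).inter_open_nonempty _ (hV.preimage hc) (hVne.preimage hs)
    obtain ⟨x, rfl⟩ := hs y
    have hx : x ∈ f ⁻¹' V ∩ E n := by_contra fun hx => hy ⟨x, hx, rfl⟩
    exact ⟨f x, hx.1, fun ⟨x', hx', hx'x⟩ => hy ⟨x', fun h => hx' h.2, hx'x⟩⟩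
  · rintro _ hy ⟨x, hxs, rfl⟩
    obtain ⟨n, hn⟩ : ∃ n, x ∉ E n := by
      by_contra! hall
      exact hEs (mem_iInter.2 hall) hxs
    exact mem_iInter.1 hy n ⟨x, hn, rfl⟩

end IrreducibleMap

theorem Continuous.surjective_of_denseRange {X Y : Type*} [TopologicalSpace X] [CompactSpace X]
    [TopologicalSpace Y] [T2Space Y] {f : X → Y} (hf : Continuous f) (hd : DenseRange f) :
    Function.Surjective f := by
  rw [← range_eq_univ, ← (isCompact_range hf).isClosed.closure_eq, hd.closure_range]

section Compactification

variable {X B₁ B₂ : Type*} [TopologicalSpace X] [TopologicalSpace B₁] [TopologicalSpace B₂]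
  {e₁ : X → B₁} {e₂ : X → B₂} {π : B₁ → B₂}

theorem eq_of_apply_eq_of_comp_eq [T2Space B₁] (he₁ : Continuous e₁) (hd₁ : DenseRange e₁)
    (he₂ : IsInducing e₂) (hπ : Continuous π) (hcomp : π ∘ e₁ = e₂) {z : B₁} {x : X}
    (h : π z = e₂ x) : z = e₁ x := by
  have : (comap e₁ (𝓝 z)).NeBot := comap_neBot fun t ht =>
    let ⟨_, hbt, a, ha⟩ := mem_closure_iff_nhds.1 (hd₁ z) t ht
    ⟨a, ha ▸ hbt⟩
  have hz : Tendsto e₁ (comap e₁ (𝓝 z)) (𝓝 z) := tendsto_comap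
  have hx : Tendsto id (comap e₁ (𝓝 z)) (𝓝 x) := by
    rw [he₂.tendsto_nhds_iff, Function.comp_id, ← h, ← hcomp]
    exact (hπ.tendsto z).comp hz
  exact tendsto_nhds_unique hz ((he₁.tendsto x).comp hx)

theorem preimage_range_of_comp_eq [T2Space B₁] (he₁ : Continuous e₁) (hd₁ : DenseRange e₁)
    (he₂ : IsInducing e₂) (hπ : Continuous π) (hcomp : π ∘ e₁ = e₂) :
    π ⁻¹' range e₂ = range e₁ := by
  refine Subset.antisymm ?_ (by rw [← hcomp, range_comp]; exact subset_preimage_image π _)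
  rintro z ⟨x, hx⟩
  exact ⟨x, (eq_of_apply_eq_of_comp_eq he₁ hd₁ he₂ hπ hcomp hx.symm).symm⟩

theorem isIrreducibleMap_of_comp_eq [T2Space B₁] (he₁ : Continuous e₁) (hd₁ : DenseRange e₁)
    (he₂ : IsInducing e₂) (hπ : Continuous π) (hcomp : π ∘ e₁ = e₂) : IsIrreducibleMap π := by
  intro F hF hFπ
  have hrange : range e₁ ⊆ F := by
    rintro _ ⟨x, rfl⟩
    obtain ⟨z, hzF, hz⟩ : e₂ x ∈ π '' F := hFπ ▸ mem_univ _
    rwa [eq_of_apply_eq_of_comp_eq he₁ hd₁ he₂ hπ hcomp hz] at hzF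
  simpa [hF.closure_eq, hd₁.closure_range] using closure_mono hrange

end Compactification

section StoneCech

variable {X Y : Type*} [TopologicalSpace X] [TopologicalSpace Y]

noncomputable def Homeomorph.stoneCechCongr (h : X ≃ₜ Y) : StoneCech X ≃ₜ StoneCech Y where
  toFun := stoneCechExtend (continuous_stoneCechUnit.comp h.continuous)
  invFun := stoneCechExtend (continuous_stoneCechUnit.comp h.symm.continuous)
  left_inv := congrFun <| stoneCech_hom_ext
    ((continuous_stoneCechExtend _).comp (continuous_stoneCechExtend _)) continuous_id
    (by ext x; simp)
  right_inv := congrFun <| stoneCech_hom_ext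
    ((continuous_stoneCechExtend _).comp (continuous_stoneCechExtend _)) continuous_id
    (by ext x; simp)
  continuous_toFun := continuous_stoneCechExtend _
  continuous_invFun := continuous_stoneCechExtend _

@[simp]
theorem Homeomorph.stoneCechCongr_stoneCechUnit (h : X ≃ₜ Y) (x : X) :
    h.stoneCechCongr (stoneCechUnit x) = stoneCechUnit (h x) :=
  stoneCechExtend_stoneCechUnit (continuous_stoneCechUnit.comp h.continuous) x

theorem Homeomorph.stoneCechCongr_image_compl_range (h : X ≃ₜ Y) :
    h.stoneCechCongr '' (range stoneCechUnit)ᶜ = (range stoneCechUnit)ᶜ := by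
  have hcomm : h.stoneCechCongr ∘ stoneCechUnit = stoneCechUnit ∘ h :=
    funext h.stoneCechCongr_stoneCechUnit
  rw [image_compl_eq h.stoneCechCongr.bijective, ← range_comp, hcomm, h.surjective.range_comp]

end StoneCech

theorem IsGδ.exists_antitone_isClosed_mem_nhds {X : Type*} [TopologicalSpace X] [RegularSpace X]
    {T : Set X} (hT : IsGδ T) {p : X} (hp : p ∈ T) :
    ∃ F : ℕ → Set X, Antitone F ∧ (∀ n, IsClosed (F n)) ∧ (∀ n, F n ∈ 𝓝 p) ∧ ⋂ n, F n ⊆ T := by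
  obtain ⟨O, hOo, rfl⟩ := isGδ_iff_eq_iInter_nat.1 hT
  choose C hC hCc hCO using fun n =>
    exists_mem_nhds_isClosed_subset ((hOo n).mem_nhds (mem_iInter.1 hp n))
  refine ⟨fun n => ⋂ k ≤ n, C k, fun m n hmn => biInter_mono (fun k hk => le_trans hk hmn)
      fun _ _ => le_rfl, fun n => isClosed_biInter fun k _ => hCc k,
    fun n => (biInter_mem (finite_le_nat n)).2 fun k _ => hC k, ?_⟩
  exact iInter_mono fun n x hx => hCO n (mem_iInter₂.1 hx n le_rfl)

theorem exists_isGδ_nonempty_subset_of_isMeagre_inter_compl {X : Type*} [TopologicalSpace X]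
    [BaireSpace X] {W s : Set X} (hW : IsOpen W) (hWne : W.Nonempty) (h : IsMeagre (W ∩ sᶜ)) :
    ∃ T, IsGδ T ∧ T.Nonempty ∧ T ⊆ s := by
  obtain ⟨T, hTs, hTG, hTd⟩ := mem_residual.1 h
  refine ⟨W ∩ T, hW.isGδ.inter hTG, hTd.inter_open_nonempty W hW hWne, ?_⟩
  exact fun x ⟨hxW, hxT⟩ => by_contra fun hxs => hTs hxT ⟨hxW, hxs⟩

theorem isLindelof_compl_of_forall_isCompact_subset {B : Type*} [TopologicalSpace B]
    [CompactSpace B] {S : Set B}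
    (h : ∀ C, IsCompact C → C ⊆ S → ∃ T, IsGδ T ∧ C ⊆ T ∧ T ⊆ S) : IsLindelof Sᶜ := by
  refine isLindelof_of_countable_subcover fun U hUo hSU => ?_
  obtain ⟨T, hT, hCT, hTS⟩ :=
    h (⋃ i, U i)ᶜ (isOpen_iUnion hUo).isClosed_compl.isCompact (compl_subset_comm.1 hSU)
  obtain ⟨O, hOo, rfl⟩ := isGδ_iff_eq_iInter_nat.1 hT
  have hTc : IsLindelof (⋂ n, O n)ᶜ := by
    rw [compl_iInter]
    exact isLindelof_iUnion fun n => (hOo n).isClosed_compl.isCompact.isLindelof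
  obtain ⟨t, htc, ht⟩ := hTc.elim_countable_subcover U hUo (compl_subset_comm.1 hCT)
  exact ⟨t, htc, (compl_subset_compl.2 hTS).trans ht⟩

theorem Topology.IsInducing.isCompact_preimage_of_subset_range {X B : Type*} [TopologicalSpace X]
    [TopologicalSpace B] {e : X → B} (he : IsInducing e) {C : Set B} (hC : IsCompact C)
    (hCe : C ⊆ range e) : IsCompact (e ⁻¹' C) :=
  he.isCompact_iff.2 (by rwa [image_preimage_eq_of_subset hCe])

section ParatopologicalGroup

variable {G B : Type*} [TopologicalSpace G] [TopologicalSpace B]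

/- Otherwise separate `y` from the compact set `e (M * K)`, `K = e⁻¹ (⋂ n, F n)`; the tube lemma
for multiplication and compactness of the `F n` push some `e (M * e⁻¹ F N)` into the
separating neighbourhood of `e (M * K)`. -/
theorem mem_range_of_forall_mem_closure_image_mul [Mul G] [ContinuousMul G] [T2Space B]
    {e : G → B} (he : IsEmbedding e) {M : Set G} (hM : IsCompact M) {F : ℕ → Set B}
    (hFa : Antitone F) (hFc : ∀ n, IsCompact (F n)) (hFe : ⋂ n, F n ⊆ range e) {y : B}
    (hy : ∀ n, y ∈ closure (e '' (M * e ⁻¹' F n))) : y ∈ range e := by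
  by_contra hye
  set K := e ⁻¹' ⋂ n, F n
  have hK : IsCompact K := he.isInducing.isCompact_preimage_of_subset_range
    ((hFc 0).of_isClosed_subset (isClosed_iInter fun n => (hFc n).isClosed) (iInter_subset F 0))
    hFe
  obtain ⟨O', O, hO'o, hOo, hMKO', hyO, hdisj⟩ :=
    SeparatedNhds.of_isCompact_isCompact ((hM.mul hK).image he.continuous) isCompact_singleton
      (disjoint_singleton_right.2 fun hy' => hye (image_subset_range _ _ hy'))
  obtain ⟨P, Q, -, hQo, hMP, hKQ, hPQ⟩ := generalized_tube_lemma hM hK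
    ((hO'o.preimage he.continuous).preimage continuous_mul)
    fun p hp => hMKO' ⟨_, mul_mem_mul hp.1 hp.2, rfl⟩
  obtain ⟨Q', hQ'o, rfl⟩ := he.isInducing.isOpen_iff.1 hQo
  obtain ⟨N, hN⟩ : ∃ N, F N ⊆ Q' := exists_subset_nhds_of_isCompact hFa.directed_ge hFc
    fun b hb => hQ'o.mem_nhds (by obtain ⟨k, rfl⟩ := hFe hb; exact hKQ hb)
  have hO' : e '' (M * e ⁻¹' F N) ⊆ O' := by
    rintro _ ⟨_, ⟨a, ha, b, hb, rfl⟩, rfl⟩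
    exact hPQ (show (a, b) ∈ P ×ˢ (e ⁻¹' Q') from ⟨hMP ha, hN hb⟩)
  exact (hdisj.closure_left hOo).ne_of_mem (closure_mono hO' (hy N)) (hyO rfl) rfl

theorem exists_isGδ_subset_range_of_isCompact [Group G] [ContinuousMul G] [CompactSpace B]
    [T2Space B] {e : G → B} (he : IsEmbedding e) (hd : DenseRange e) {T : Set B} (hT : IsGδ T)
    (hTne : T.Nonempty) (hTe : T ⊆ range e) {C : Set B} (hC : IsCompact C) (hCe : C ⊆ range e) :
    ∃ T', IsGδ T' ∧ C ⊆ T' ∧ T' ⊆ range e := by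
  obtain ⟨p, hp⟩ := hTne
  obtain ⟨x₀, rfl⟩ := hTe hp
  obtain ⟨F, hFa, hFc, hFn, hFT⟩ := hT.exists_antitone_isClosed_mem_nhds hp
  set M := e ⁻¹' C * {x₀⁻¹}
  have hM : IsCompact M :=
    (he.isInducing.isCompact_preimage_of_subset_range hC hCe).mul isCompact_singleton
  choose U hUo hUe using fun n => he.isInducing.isOpen_iff.1 <|
    IsOpen.mul_left (s := M) ((isOpen_interior (s := F n)).preimage he.continuous)
  refine ⟨⋂ n, U n, .iInter_of_isOpen hUo, fun c hc => mem_iInter.2 fun n => ?_, fun y hy => ?_⟩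
  · obtain ⟨a, rfl⟩ := hCe hc
    rw [← mem_preimage, hUe n]
    exact ⟨a * x₀⁻¹, mul_mem_mul hc rfl, x₀, mem_interior_iff_mem_nhds.2 (hFn n),
      inv_mul_cancel_right a x₀⟩
  · refine mem_range_of_forall_mem_closure_image_mul he hM hFa (fun n => (hFc n).isCompact)
      (hFT.trans hTe) fun n => ?_
    have hUn : U n ⊆ closure (e '' (e ⁻¹' U n)) := by
      rw [image_preimage_eq_inter_range]
      exact hd.open_subset_closure_inter (hUo n)
    rw [hUe n] at hUn
    exact closure_mono (image_mono (mul_subset_mul_left (preimage_mono interior_subset)))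
      (hUn (mem_iInter.1 hy n))

theorem IsCompact.weaklyLocallyCompactSpace_of_mem_nhds [Group G] [ContinuousConstSMul G G]
    {K : Set G} (hK : IsCompact K) {x : G} (h : K ∈ 𝓝 x) : WeaklyLocallyCompactSpace G :=
  ⟨fun y => ⟨(y * x⁻¹) • K, hK.smul _, by
    rw [← preimage_smul_inv]
    exact (continuous_const_smul _).continuousAt.preimage_mem_nhds (by simpa using h)⟩⟩

theorem dense_compl_range_of_not_locallyCompactSpace [Group G] [ContinuousConstSMul G G]
    [R1Space G]
    [LocallyCompactSpace B] {e : G → B} (he : IsEmbedding e) (hG : ¬ LocallyCompactSpace G) :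
    Dense (range e)ᶜ := by
  rw [← interior_eq_empty_iff_dense_compl, ← not_nonempty_iff_eq_empty]
  rintro ⟨_, hx⟩
  obtain ⟨K, hK, hxK, hKe⟩ := exists_compact_subset isOpen_interior hx
  obtain ⟨g, rfl⟩ := interior_subset hx
  have : WeaklyLocallyCompactSpace G :=
    (he.isInducing.isCompact_preimage_of_subset_range hK (hKe.trans interior_subset)
      ).weaklyLocallyCompactSpace_of_mem_nhds
      (he.continuous.continuousAt.preimage_mem_nhds (mem_interior_iff_mem_nhds.1 hxK))
  exact hG inferInstance

theorem StoneCech.exists_isOpen_subset_isMeagre_inter_compl_range [Group G]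
    [SeparatelyContinuousMul G]
    {W : Set (StoneCech G)} (hWo : IsOpen W) (hWne : W.Nonempty)
    (hWm : IsMeagre (W ∩ (range stoneCechUnit)ᶜ)) {O : Set (StoneCech G)} (hOo : IsOpen O)
    (hOne : O.Nonempty) :
    ∃ V ⊆ O, IsOpen V ∧ V.Nonempty ∧ IsMeagre (V ∩ (range stoneCechUnit)ᶜ) := by
  obtain ⟨g, hgW⟩ := denseRange_stoneCechUnit.exists_mem_open hWo hWne
  obtain ⟨h, hhO⟩ := denseRange_stoneCechUnit.exists_mem_open hOo hOne
  set κ := (Homeomorph.mulLeft (h * g⁻¹)).stoneCechCongr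
  have hκW : κ '' W ∩ (range stoneCechUnit)ᶜ = κ '' (W ∩ (range stoneCechUnit)ᶜ) := by
    rw [image_inter κ.injective, Homeomorph.stoneCechCongr_image_compl_range]
  refine ⟨κ '' W ∩ O, inter_subset_right, (κ.isOpenMap W hWo).inter hOo,
    ⟨stoneCechUnit h, ⟨stoneCechUnit g, hgW, by simp [κ]⟩, hhO⟩, ?_⟩
  rw [inter_right_comm, hκW]
  exact (κ.isInducing.isMeagre_image hWm).inter

theorem exists_isOpen_subset_isMeagre_inter_compl_range [Group G] [SeparatelyContinuousMul G]
    [CompactSpace B] [T2Space B] {e : G → B} (he : IsEmbedding e) (hd : DenseRange e)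
    {W : Set B} (hWo : IsOpen W) (hWne : W.Nonempty) (hWm : IsMeagre (W ∩ (range e)ᶜ))
    {O : Set B} (hOo : IsOpen O) (hOne : O.Nonempty) :
    ∃ V ⊆ O, IsOpen V ∧ V.Nonempty ∧ IsMeagre (V ∩ (range e)ᶜ) := by
  set π := stoneCechExtend he.continuous
  have hπc : Continuous π := continuous_stoneCechExtend he.continuous
  have hcomp : π ∘ stoneCechUnit = e := stoneCechExtend_extends he.continuous
  have hπs : Function.Surjective π := hπc.surjective_of_denseRange (hcomp ▸ hd).of_comp
  have hπcl : IsClosedMap π := hπc.isClosedMap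
  have hπi : IsIrreducibleMap π := isIrreducibleMap_of_comp_eq continuous_stoneCechUnit
    denseRange_stoneCechUnit he.isInducing hπc hcomp
  have hπY : π ⁻¹' (range e)ᶜ = (range stoneCechUnit)ᶜ := by
    rw [preimage_compl, preimage_range_of_comp_eq continuous_stoneCechUnit
      denseRange_stoneCechUnit he.isInducing hπc hcomp]
  obtain ⟨V, hVO, hVo, hVne, hVm⟩ := StoneCech.exists_isOpen_subset_isMeagre_inter_compl_range
    (hWo.preimage hπc) (hWne.preimage hπs)
    (by rw [← hπY, ← preimage_inter]; exact hπi.isMeagre_preimage hπc hπcl hπs hWm)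
    (hOo.preimage hπc) (hOne.preimage hπs)
  refine ⟨(π '' Vᶜ)ᶜ, fun y hy => ?_, (hπcl _ hVo.isClosed_compl).isOpen_compl,
    hπi.nonempty_compl_image_compl hVo hVne, (hπi.isMeagre_image hπc hπcl hπs hVm).mono ?_⟩
  · obtain ⟨z, rfl⟩ := hπs y
    exact hVO (by_contra fun hz => hy ⟨z, hz, rfl⟩)
  · rintro y ⟨hy, hyY⟩
    obtain ⟨z, rfl⟩ := hπs y
    exact ⟨z, ⟨by_contra fun hz => hy ⟨z, hz, rfl⟩, hπY ▸ hyY⟩, rfl⟩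

end ParatopologicalGroup

/-- If `G` is a non-locally compact paratopological group and `bG` (here `B`
with embedding `e`) is a Hausdorff compactification of `G` such that the remainder
`Y = bG \ G` does not have the Baire property, then `Y` is Lindelöf and meager. -/
theorem stmt0 {G B : Type*} [TopologicalSpace G] [T35Space G] [Group G] [ContinuousMul G]
    [TopologicalSpace B] [CompactSpace B] [T2Space B]
    (hnlc : ¬ LocallyCompactSpace G)
    (e : G → B) (he : Topology.IsEmbedding e) (hd : DenseRange e)
    (hY : ¬ BaireSpace ((Set.range e)ᶜ : Set B)) :
    LindelofSpace ((Set.range e)ᶜ : Set B) ∧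
      IsMeagre (Set.univ : Set ((Set.range e)ᶜ : Set B)) := by
  obtain ⟨W, hWo, hWne, hWm⟩ := exists_isOpen_isMeagre_inter_of_not_baireSpace hY
  refine ⟨?_, ?_⟩
  · obtain ⟨T, hT, hTne, hTe⟩ :=
      exists_isGδ_nonempty_subset_of_isMeagre_inter_compl hWo hWne.left hWm
    exact isLindelof_iff_lindelofSpace.1 <| isLindelof_compl_of_forall_isCompact_subset
      fun C hC hCe => exists_isGδ_subset_range_of_isCompact he hd hT hTne hTe hC hCe
  · have hYd : Dense (range e)ᶜ := dense_compl_range_of_not_locallyCompactSpace he hnlc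
    simpa using hYd.isMeagre_preimage_val <| isMeagre_of_forall_isOpen_exists_subset
      fun O hO hOne =>
        exists_isOpen_subset_isMeagre_inter_compl_range he hd hWo hWne.left hWm hO hOne
end

section
/- If G is a paratopological group containing a non-empty compact subset of countable character in G, then G is of countable type. -/
open Set

/-- A set `A` has countable character in `X`: there is a countable family of open sets
containing `A` whose intersection is `A` and such that every open neighborhood of `A`
contains a member of the family. -/
def HasCountableChar {X : Type*} [TopologicalSpace X] (A : Set X) : Prop :=
  ∃ U : ℕ → Set X, (∀ n, IsOpen (U n) ∧ A ⊆ U n) ∧ A = ⋂ n, U n ∧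
    ∀ V : Set X, IsOpen V → A ⊆ V → ∃ n, U n ⊆ V

/-- A space is of countable type if every compact subset is contained in a compact
subset having countable character. -/
def CountableType (X : Type*) [TopologicalSpace X] : Prop :=
  ∀ K : Set X, IsCompact K → ∃ K' : Set X, IsCompact K' ∧ K ⊆ K' ∧ HasCountableChar K'

/-! If `K` is a nonempty compact set of countable character and `k ∈ K`, every compact `C` lies in
the compact set `C k⁻¹ K`. Translating a countable base `(U n)` of neighbourhoods of `K` gives the
sets `C k⁻¹ U n`, and these form a base at `C k⁻¹ K` by the tube lemma for the compact sets
`C k⁻¹` and `K`. In a `T₁` space a countable base of neighbourhoods of a set automatically has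
that set as its intersection. -/

open Pointwise

lemma hasCountableChar_of_forall_exists_subset {X : Type*} [TopologicalSpace X] [T1Space X]
    {A : Set X} (U : ℕ → Set X) (hU : ∀ n, IsOpen (U n) ∧ A ⊆ U n)
    (hbasis : ∀ V : Set X, IsOpen V → A ⊆ V → ∃ n, U n ⊆ V) :
    HasCountableChar A := by
  refine ⟨U, hU, (subset_iInter fun n => (hU n).2).antisymm fun x hx => ?_, hbasis⟩
  by_contra hxA
  obtain ⟨n, hn⟩ := hbasis {x}ᶜ isOpen_compl_singleton fun y hy (hyx : y = x) => hxA (hyx ▸ hy)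
  exact hn (mem_iInter.1 hx n) rfl

lemma IsCompact.exists_isOpen_mul_subset {M : Type*} [TopologicalSpace M] [Mul M]
    [ContinuousMul M] {F K W : Set M} (hF : IsCompact F) (hK : IsCompact K) (hW : IsOpen W)
    (hFKW : F * K ⊆ W) : ∃ V, IsOpen V ∧ K ⊆ V ∧ F * V ⊆ W := by
  obtain ⟨u, v, -, hv, hFu, hKv, huv⟩ := generalized_tube_lemma hF hK
    (hW.preimage continuous_mul) (by rwa [← image_subset_iff, image_mul_prod])
  refine ⟨v, hv, hKv, ?_⟩
  rw [← image_mul_prod, image_subset_iff]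
  exact (prod_mono hFu le_rfl).trans huv

lemma IsCompact.hasCountableChar_mul {G : Type*} [TopologicalSpace G] [T1Space G] [Group G]
    [ContinuousMul G] {F K : Set G} (hF : IsCompact F) (hK : IsCompact K)
    (hχ : HasCountableChar K) : HasCountableChar (F * K) := by
  obtain ⟨U, hU, -, hbasis⟩ := hχ
  refine hasCountableChar_of_forall_exists_subset (fun n => F * U n)
    (fun n => ⟨(hU n).1.mul_left, mul_subset_mul_left (hU n).2⟩) fun W hW hFKW => ?_
  obtain ⟨V, hV, hKV, hFVW⟩ := hF.exists_isOpen_mul_subset hK hW hFKW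
  obtain ⟨n, hn⟩ := hbasis V hV hKV
  exact ⟨n, (mul_subset_mul_left hn).trans hFVW⟩

/-- a paratopological group containing a nonempty compact set of countable
character is of countable type. -/
theorem stmt1 {G : Type*} [TopologicalSpace G] [T35Space G] [Group G] [ContinuousMul G]
    (K : Set G) (hne : K.Nonempty) (hK : IsCompact K) (hχ : HasCountableChar K) :
    CountableType G := by
  intro C hC
  obtain ⟨k, hk⟩ := hne
  have hCk : IsCompact (C * {k⁻¹}) := hC.mul isCompact_singleton
  refine ⟨C * {k⁻¹} * K, hCk.mul hK, fun c hc => ?_, hCk.hasCountableChar_mul hK hχ⟩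
  simpa using mul_mem_mul (mul_mem_mul hc (mem_singleton k⁻¹)) hk
end

section
/- A remainder of a non-locally compact paratopological group cannot simultaneously have the Baire property and be meager: equivalently, a non-empty space failing the Baire property has a non-empty open meager subset, and conversely a space with a non-empty open meager subset fails the Baire property. -/
open Set

theorem exists_isOpen_nonempty_isMeagre_of_not_baireSpace {X : Type*} [TopologicalSpace X]
    (h : ¬ BaireSpace X) : ∃ U : Set X, IsOpen U ∧ U.Nonempty ∧ IsMeagre U := by
  obtain ⟨f, hfo, hfd, hnd⟩ : ∃ f : ℕ → Set X, (∀ n, IsOpen (f n)) ∧ (∀ n, Dense (f n)) ∧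
      ¬ Dense (⋂ n, f n) := by
    by_contra! hf
    exact h ⟨hf⟩
  obtain ⟨U, hUo, hUne, hUdisj⟩ :
      ∃ U : Set X, IsOpen U ∧ U.Nonempty ∧ ¬ (U ∩ ⋂ n, f n).Nonempty := by
    simpa [dense_iff_inter_open] using hnd
  have hres : (⋂ n, f n) ∈ residual X :=
    countable_iInter_mem.mpr fun n => residual_of_dense_open (hfo n) (hfd n)
  exact ⟨U, hUo, hUne, Filter.mem_of_superset hres fun x hx hxU => hUdisj ⟨x, hxU, hx⟩⟩

theorem not_baireSpace_iff_exists_isOpen_nonempty_isMeagre {X : Type*} [TopologicalSpace X] :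
    ¬ BaireSpace X ↔ ∃ U : Set X, IsOpen U ∧ U.Nonempty ∧ IsMeagre U :=
  ⟨exists_isOpen_nonempty_isMeagre_of_not_baireSpace,
    fun ⟨_, hUo, hUne, hU⟩ _ => not_isMeagre_of_isOpen hUo hUne hU⟩

theorem nonempty_compl_range_of_not_locallyCompactSpace {G B : Type*} [TopologicalSpace G]
    [TopologicalSpace B] [LocallyCompactSpace B] (hG : ¬ LocallyCompactSpace G) {e : G → B}
    (he : Topology.IsEmbedding e) : (range e)ᶜ.Nonempty := by
  by_contra! h
  rw [compl_empty_iff] at h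
  exact hG (Topology.IsClosedEmbedding.locallyCompactSpace ⟨he, h ▸ isClosed_univ⟩)

theorem stmt2_general {G B : Type*} [TopologicalSpace G]
    [TopologicalSpace B] [CompactSpace B] [T2Space B]
    (hnlc : ¬ LocallyCompactSpace G)
    (e : G → B) (he : Topology.IsEmbedding e)
    {X : Type*} [TopologicalSpace X] :
    ¬ (BaireSpace ((Set.range e)ᶜ : Set B) ∧
        IsMeagre (Set.univ : Set ((Set.range e)ᶜ : Set B))) ∧
      ((¬ BaireSpace X) ↔ ∃ U : Set X, IsOpen U ∧ U.Nonempty ∧ IsMeagre U) := by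
  refine ⟨fun ⟨_, hmeagre⟩ => ?_, not_baireSpace_iff_exists_isOpen_nonempty_isMeagre⟩
  have : Nonempty ((range e)ᶜ : Set B) :=
    (nonempty_compl_range_of_not_locallyCompactSpace hnlc he).to_subtype
  exact not_isMeagre_of_isOpen isOpen_univ univ_nonempty hmeagre

/-- a remainder `Y` of a non-locally compact paratopological group cannot
simultaneously be a Baire space and be meager in itself; equivalently (second conjunct),
a nonempty space fails the Baire property iff it has a nonempty open meager subset. -/
theorem stmt2 {G B : Type*} [TopologicalSpace G] [T35Space G] [Group G] [ContinuousMul G]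
    [TopologicalSpace B] [CompactSpace B] [T2Space B]
    (hnlc : ¬ LocallyCompactSpace G)
    (e : G → B) (he : Topology.IsEmbedding e) (hd : DenseRange e)
    {X : Type*} [TopologicalSpace X] [T35Space X] [Nonempty X] :
    ¬ (BaireSpace ((Set.range e)ᶜ : Set B) ∧
        IsMeagre (Set.univ : Set ((Set.range e)ᶜ : Set B))) ∧
      ((¬ BaireSpace X) ↔ ∃ U : Set X, IsOpen U ∧ U.Nonempty ∧ IsMeagre U) :=
  stmt2_general hnlc e he
end

section
/- Every point-finite collection of non-empty open subsets of a ccc Baire space is countable. -/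
/-! The number of members of `S` containing a point is lower semicontinuous, so by the Baire
category theorem it is bounded on some nonempty open subset of any nonempty open set. Near a
point where it is maximal it is constant, so some nonempty open set meets only finitely many
members of `S`. Hence the open sets meeting only finitely many members of `S` form a π-base; by
the ccc, a maximal disjoint family of them is countable and has dense union, so every member of
`S` is among the finitely many met by one of its countably many members. -/

open Set

/-- A space is ccc if every pairwise disjoint family of nonempty open sets is countable. -/
def CCC (X : Type*) [TopologicalSpace X] : Prop :=
  ∀ S : Set (Set X), (∀ U ∈ S, IsOpen U ∧ U.Nonempty) → S.PairwiseDisjoint id → S.Countable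

section PointFinite

variable {X : Type*} {S : Set (Set X)}

theorem setOf_mem_subset_of_mem_sInter {x y : X} (hy : y ∈ ⋂₀ {U ∈ S | x ∈ U}) :
    {U ∈ S | x ∈ U} ⊆ {U ∈ S | y ∈ U} :=
  fun U hU => ⟨hU.1, hy U hU⟩

theorem setOf_inter_nonempty_subset_of_ncard_le (hpf : ∀ x, {U ∈ S | x ∈ U}.Finite)
    {W : Set X} {x : X} (hmax : ∀ y ∈ W, {U ∈ S | y ∈ U}.ncard ≤ {U ∈ S | x ∈ U}.ncard) :
    {U ∈ S | (U ∩ (W ∩ ⋂₀ {U ∈ S | x ∈ U})).Nonempty} ⊆ {U ∈ S | x ∈ U} := by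
  rintro U ⟨hUS, y, hyU, hyW, hyx⟩
  rw [eq_of_subset_of_ncard_le (setOf_mem_subset_of_mem_sInter hyx) (hmax y hyW) (hpf y)]
  exact ⟨hUS, hyU⟩

variable [TopologicalSpace X]

theorem isClosed_setOf_ncard_le (hopen : ∀ U ∈ S, IsOpen U)
    (hpf : ∀ x, {U ∈ S | x ∈ U}.Finite) (n : ℕ) :
    IsClosed {x | {U ∈ S | x ∈ U}.ncard ≤ n} := by
  refine isOpen_compl_iff.1 (isOpen_iff_forall_mem_open.2 fun x hx => ?_)
  refine ⟨⋂₀ {U ∈ S | x ∈ U}, fun y hy => ?_,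
    (hpf x).isOpen_sInter fun U hU => hopen U hU.1, fun U hU => hU.2⟩
  exact fun hyn => hx ((ncard_le_ncard (setOf_mem_subset_of_mem_sInter hy) (hpf y)).trans hyn)

theorem exists_isOpen_subset_setOf_inter_nonempty_finite [BaireSpace X]
    (hopen : ∀ U ∈ S, IsOpen U) (hpf : ∀ x, {U ∈ S | x ∈ U}.Finite)
    {O : Set X} (hO : IsOpen O) (hne : O.Nonempty) :
    ∃ W ⊆ O, IsOpen W ∧ W.Nonempty ∧ {U ∈ S | (U ∩ W).Nonempty}.Finite := by
  let ord (x : X) : ℕ := {U ∈ S | x ∈ U}.ncard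
  obtain ⟨x₀, hx₀O, hx₀⟩ := (dense_iUnion_interior_of_closed (isClosed_setOf_ncard_le hopen hpf)
    (iUnion_eq_univ_iff.2 fun x => ⟨ord x, le_refl (ord x)⟩)).inter_open_nonempty O hO hne
  obtain ⟨n, hn⟩ := mem_iUnion.1 hx₀
  set W₀ := O ∩ interior {x | ord x ≤ n}
  have hbdd : BddAbove (ord '' W₀) :=
    ⟨n, forall_mem_image.2 (inter_subset_right.trans interior_subset)⟩
  obtain ⟨x, hxW₀, hx⟩ := Nat.sSup_mem ⟨_, mem_image_of_mem ord (show x₀ ∈ W₀ from ⟨hx₀O, hn⟩)⟩ hbdd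
  refine ⟨W₀ ∩ ⋂₀ {U ∈ S | x ∈ U}, inter_subset_left.trans inter_subset_left,
    (hO.inter isOpen_interior).inter ((hpf x).isOpen_sInter fun U hU => hopen U hU.1),
    ⟨x, hxW₀, fun U hU => hU.2⟩, ?_⟩
  refine (hpf x).subset (setOf_inter_nonempty_subset_of_ncard_le hpf fun y hy => ?_)
  exact (le_csSup hbdd (mem_image_of_mem ord hy)).trans_eq hx.symm

theorem CCC.exists_countable_dense_sUnion (hccc : CCC X) (P : Set X → Prop)
    (hP : ∀ O, IsOpen O → O.Nonempty → ∃ W ⊆ O, IsOpen W ∧ W.Nonempty ∧ P W) :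
    ∃ T : Set (Set X), T.Countable ∧ (∀ W ∈ T, IsOpen W ∧ W.Nonempty ∧ P W) ∧ Dense (⋃₀ T) := by
  obtain ⟨T, ⟨hTP, hTdisj⟩, hTmax⟩ : ∃ T, Maximal (· ∈ {T : Set (Set X) |
      (∀ W ∈ T, IsOpen W ∧ W.Nonempty ∧ P W) ∧ T.PairwiseDisjoint id}) T := by
    refine zorn_subset _ fun C hC hchain =>
      ⟨⋃₀ C, ⟨?_, ?_⟩, fun T hT => subset_sUnion_of_mem hT⟩
    · rintro W ⟨T, hT, hWT⟩
      exact (hC hT).1 W hWT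
    · exact (pairwiseDisjoint_sUnion hchain.directedOn).2 fun T hT => (hC hT).2
  refine ⟨T, hccc T (fun W hW => ⟨(hTP W hW).1, (hTP W hW).2.1⟩) hTdisj, hTP, ?_⟩
  by_contra hT
  obtain ⟨W, hW, hWo, hWne, hPW⟩ := hP _ isClosed_closure.isOpen_compl
    (nonempty_compl.2 fun h => hT (dense_iff_closure_eq.2 h))
  have hWdisj : ∀ V ∈ T, Disjoint W V := fun V hV =>
    disjoint_left.2 fun x hxW hxV => hW hxW (subset_closure ⟨V, hV, hxV⟩)
  have hWT : W ∉ T := fun h => hWne.ne_empty (disjoint_self.1 (hWdisj W h))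
  refine hWT (hTmax ⟨forall_mem_insert.2 ⟨⟨hWo, hWne, hPW⟩, hTP⟩,
    hTdisj.insert fun V hV _ => hWdisj V hV⟩ (subset_insert W T) (mem_insert W T))

end PointFinite

/-- every point-finite collection of nonempty open subsets of a ccc Baire
space is countable. -/
theorem stmt6 {X : Type*} [TopologicalSpace X] [BaireSpace X] (hccc : CCC X)
    (S : Set (Set X)) (hopen : ∀ U ∈ S, IsOpen U ∧ U.Nonempty)
    (hpf : ∀ x : X, {U ∈ S | x ∈ U}.Finite) :
    S.Countable := by
  obtain ⟨T, hTc, hT, hdense⟩ :=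
    hccc.exists_countable_dense_sUnion (fun W => {U ∈ S | (U ∩ W).Nonempty}.Finite)
      fun _ hO hne => exists_isOpen_subset_setOf_inter_nonempty_finite
        (fun U hU => (hopen U hU).1) hpf hO hne
  refine (hTc.biUnion fun W hW => (hT W hW).2.2.countable).mono fun U hU => ?_
  obtain ⟨x, hxU, W, hW, hxW⟩ := hdense.inter_open_nonempty U (hopen U hU).1 (hopen U hU).2
  exact mem_biUnion hW ⟨hU, x, hxU, hxW⟩
end

section
/- In the two-arrows space Z = X ∪ Y with X = {(x,0) : 0 < x ≤ 1} and Y = {(x,1) : 0 ≤ x < 1}, the subspace Y is a remainder of the Sorgenfrey-line-like subspace X, and Y admits a structure of a paratopological group: the operation (x,1)·(y,1) = (x+y mod 1, 1) (addition modulo 1) is jointly continuous on Y. -/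
open Set

/-- The two-arrows (double arrow) space of Alexandroff and Urysohn, as the subset
`{(x,0) : 0 < x ≤ 1} ∪ {(x,1) : 0 ≤ x < 1}` of `ℝ ×ₗ Bool` (with `false` playing the
role of `0` and `true` the role of `1`), equipped with its own order topology. -/
def DA : Type :=
  {p : ℝ ×ₗ Bool //
    ((ofLex p).2 = false ∧ 0 < (ofLex p).1 ∧ (ofLex p).1 ≤ 1) ∨
    ((ofLex p).2 = true ∧ 0 ≤ (ofLex p).1 ∧ (ofLex p).1 < 1)}

noncomputable instance : LinearOrder DA :=
  inferInstanceAs (LinearOrder {p : ℝ ×ₗ Bool //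
    ((ofLex p).2 = false ∧ 0 < (ofLex p).1 ∧ (ofLex p).1 ≤ 1) ∨
    ((ofLex p).2 = true ∧ 0 ≤ (ofLex p).1 ∧ (ofLex p).1 < 1)})

noncomputable instance : TopologicalSpace DA := Preorder.topology DA

instance : OrderTopology DA := ⟨rfl⟩

/-- The lower arrow `X = {(x,0) : 0 < x ≤ 1}`. -/
def DAX : Set DA := {p | (ofLex p.1).2 = false}

/-- The upper arrow `Y = {(x,1) : 0 ≤ x < 1}`. -/
def DAY : Set DA := {p | (ofLex p.1).2 = true}

noncomputable def DAYmul (u v : DAY) : DAY :=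
  ⟨⟨toLex (Int.fract ((ofLex u.1.1).1 + (ofLex v.1.1).1), true),
    Or.inr ⟨rfl, Int.fract_nonneg _, Int.fract_lt_one _⟩⟩, rfl⟩

/-!
The two-arrows space is a linear order in which every subset has a least upper bound (the
supremum of the first coordinates, taken in the upper arrow if it is attained there and in the
lower arrow otherwise), so its order topology is compact and Hausdorff. Every point of `Y` is
the limit from the right of points of `X`, hence `X` is dense. The intervals `[y, b)` form a
neighbourhood base at `y ∈ Y`, so `Y` is a copy of the Sorgenfrey interval `[0, 1)`, and
addition modulo 1 is continuous there because `x + y` and `Int.fract` are both continuous from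
the right.
-/

open Filter Topology

theorem tendsto_add_nhdsGE_prod {α : Type*} [Add α] [Preorder α] [AddLeftMono α] [AddRightMono α]
    [TopologicalSpace α] [ContinuousAdd α] (a b : α) :
    Tendsto (fun p : α × α => p.1 + p.2) (𝓝[≥] a ×ˢ 𝓝[≥] b) (𝓝[≥] (a + b)) := by
  refine tendsto_nhdsWithin_of_tendsto_nhds_of_eventually_within _
    (tendsto_add.mono_left ?_) ?_
  · rw [nhds_prod_eq]
    exact prod_mono nhdsWithin_le_nhds nhdsWithin_le_nhds
  · filter_upwards [prod_mem_prod self_mem_nhdsWithin self_mem_nhdsWithin] with p hp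
    exact add_le_add hp.1 hp.2

theorem Int.tendsto_fract_nhdsGE {α : Type*} [Ring α] [LinearOrder α] [IsStrictOrderedRing α]
    [FloorRing α] [TopologicalSpace α] [OrderClosedTopology α] [IsTopologicalAddGroup α] (x : α) :
    Tendsto Int.fract (𝓝[≥] x) (𝓝[≥] Int.fract x) := by
  have hfract : Int.fract =ᶠ[𝓝[≥] x] fun y => y - ⌊x⌋ := by
    filter_upwards [tendsto_pure.1 (tendsto_floor_right_pure_floor x)] with y hy
    rw [Int.fract, hy]
  refine Tendsto.congr' hfract.symm
    (tendsto_nhdsWithin_of_tendsto_nhds_of_eventually_within _ ?_ ?_)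
  · exact ((continuous_sub_right _).tendsto x).mono_left nhdsWithin_le_nhds
  · filter_upwards [self_mem_nhdsWithin] with y hy
    exact sub_le_sub_right hy _

namespace DA

def coord (p : DA) : ℝ := (ofLex p.1).1

def arrow (p : DA) : Bool := (ofLex p.1).2

def lower (x : ℝ) (h0 : 0 < x) (h1 : x ≤ 1) : DA := ⟨toLex (x, false), Or.inl ⟨rfl, h0, h1⟩⟩

def upper (x : ℝ) (h0 : 0 ≤ x) (h1 : x < 1) : DA := ⟨toLex (x, true), Or.inr ⟨rfl, h0, h1⟩⟩

@[simp] lemma coord_lower (x : ℝ) (h0 h1) : coord (lower x h0 h1) = x := rfl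
@[simp] lemma arrow_lower (x : ℝ) (h0 h1) : arrow (lower x h0 h1) = false := rfl

lemma coord_nonneg (p : DA) : 0 ≤ coord p := by
  rcases p.2 with ⟨-, h, -⟩ | ⟨-, h, -⟩
  exacts [h.le, h]

lemma coord_le_one (p : DA) : coord p ≤ 1 := by
  rcases p.2 with ⟨-, -, h⟩ | ⟨-, -, h⟩
  exacts [h, h.le]

lemma coord_lt_one (p : DA) (hp : arrow p = true) : coord p < 1 := by
  rcases p.2 with ⟨h, -, -⟩ | ⟨-, -, h⟩
  · exact absurd (h.symm.trans hp) Bool.false_ne_true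
  · exact h

lemma arrow_eq_true_of_coord_eq_zero (p : DA) (hp : coord p = 0) : arrow p = true := by
  rcases p.2 with ⟨-, h, -⟩ | ⟨h, -, -⟩
  · exact absurd hp h.ne'
  · exact h

lemma le_def (p q : DA) :
    p ≤ q ↔ coord p < coord q ∨ coord p = coord q ∧ arrow p ≤ arrow q :=
  Prod.Lex.le_iff (x := p.1) (y := q.1)

lemma lt_def (p q : DA) :
    p < q ↔ coord p < coord q ∨ coord p = coord q ∧ arrow p < arrow q :=
  Prod.Lex.lt_iff (x := p.1) (y := q.1)

lemma coord_mono : Monotone coord := fun _ _ h =>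
  ((le_def _ _).1 h).elim le_of_lt fun h => h.1.le

lemma lt_of_coord_lt {p q : DA} (h : coord p < coord q) : p < q :=
  (lt_def p q).2 (Or.inl h)

lemma coord_lt_of_lt {p q : DA} (h : p < q) (hp : arrow p = true) : coord p < coord q := by
  rcases (lt_def p q).1 h with h | ⟨-, h⟩
  · exact h
  · exact absurd h (hp ▸ (Bool.le_true _).not_gt)

lemma le_iff_coord_le_of_arrow {p q : DA} (hp : arrow p = true) (hq : arrow q = true) :
    p ≤ q ↔ coord p ≤ coord q := by
  rw [le_def, hp, hq, le_iff_lt_or_eq (a := coord p)]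
  simp

lemma isBot_of_coord_eq_zero {p : DA} (hp : coord p = 0) : IsBot p := fun q => by
  rcases (coord_nonneg q).lt_or_eq with h | h
  · exact (lt_of_coord_lt (hp.trans_lt h)).le
  · exact (le_iff_coord_le_of_arrow (arrow_eq_true_of_coord_eq_zero p hp)
      (arrow_eq_true_of_coord_eq_zero q h.symm)).2 (hp.trans h).le

lemma exists_isLUB (s : Set DA) : ∃ a, IsLUB s a := by
  rcases s.eq_empty_or_nonempty with rfl | hs
  · exact ⟨_, isLUB_empty_iff.2 (isBot_of_coord_eq_zero (p := upper 0 le_rfl one_pos) rfl)⟩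
  set c := sSup (coord '' s)
  have hbdd : BddAbove (coord '' s) := ⟨1, by rintro _ ⟨p, -, rfl⟩; exact coord_le_one p⟩
  have hle_c : ∀ p ∈ s, coord p ≤ c := fun p hp => le_csSup hbdd ⟨p, hp, rfl⟩
  by_cases hmax : ∃ p ∈ s, coord p = c ∧ arrow p = true
  · obtain ⟨p, hps, hpc, hp⟩ := hmax
    refine ⟨p, IsGreatest.isLUB ⟨hps, fun q hq => ?_⟩⟩
    rcases (hle_c q hq).lt_or_eq with h | h
    · exact (lt_of_coord_lt (h.trans_eq hpc.symm)).le
    · exact (le_def q p).2 (Or.inr ⟨h.trans hpc.symm, hp ▸ le_top⟩)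
  simp only [not_exists, not_and] at hmax
  have hc_pos : 0 < c := by
    obtain ⟨p, hp⟩ := hs
    by_contra! hc
    have hc0 : c = 0 := le_antisymm hc ((coord_nonneg p).trans (hle_c p hp))
    have hp0 : coord p = 0 := le_antisymm (hc0 ▸ hle_c p hp) (coord_nonneg p)
    exact hmax p hp (hp0.trans hc0.symm) (arrow_eq_true_of_coord_eq_zero p hp0)
  refine ⟨lower c hc_pos (csSup_le (hs.image coord) ?_), ?_, ?_⟩
  · rintro _ ⟨p, -, rfl⟩; exact coord_le_one p
  · intro q hq
    rcases (hle_c q hq).lt_or_eq with h | h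
    · exact (lt_of_coord_lt h).le
    · refine (le_def q _).2 (Or.inr ⟨h, ?_⟩)
      simp [Bool.eq_false_iff.2 (hmax q hq h)]
  · intro u hu
    have hcu : c ≤ coord u := csSup_le (hs.image coord) (by
      rintro _ ⟨p, hp, rfl⟩; exact coord_mono (hu hp))
    exact (le_def _ u).2 (hcu.lt_or_eq.imp id fun h => ⟨h, by simp⟩)

theorem compactSpace : CompactSpace DA :=
  letI : SupSet DA := ⟨fun s => (exists_isLUB s).choose⟩
  -- `max` and `min` replace the binary operations of `completeLatticeOfSup`, so that the lattice
  -- agrees definitionally with the linear order carrying the order topology.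
  letI : CompleteLattice DA :=
    { completeLatticeOfSup DA fun s => (exists_isLUB s).choose_spec with
      sup := max, le_sup_left := le_max_left, le_sup_right := le_max_right,
      sup_le := fun _ _ _ => max_le
      inf := min, inf_le_left := min_le_left, inf_le_right := min_le_right,
      le_inf := fun _ _ _ => le_min }
  letI : CompleteLinearOrder DA :=
    { (inferInstance : CompleteLattice DA), (inferInstance : LinearOrder DA),
      LinearOrder.toBiheytingAlgebra DA with }
  compactSpace_of_completeLinearOrder

lemma isOpen_Ici {p : DA} (hp : arrow p = true) : IsOpen (Ici p) := by
  rcases (coord_nonneg p).lt_or_eq with h0 | h0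
  · convert isOpen_Ioi (a := lower (coord p) h0 (coord_le_one p)) using 1
    ext q
    rw [mem_Ici, mem_Ioi, le_def, lt_def, hp, coord_lower, arrow_lower]
    cases arrow q <;> simp
  · convert isOpen_univ
    exact eq_univ_of_forall (isBot_of_coord_eq_zero h0.symm)

lemma nhds_eq_nhdsGE {p : DA} (hp : arrow p = true) : 𝓝 p = 𝓝[≥] p :=
  (nhdsWithin_eq_nhds.2 ((isOpen_Ici hp).mem_nhds self_mem_Ici)).symm

lemma dense_DAX : Dense DAX := by
  intro p
  cases hp : arrow p
  · exact subset_closure hp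
  refine mem_closure_iff_nhds.2 fun V hV => ?_
  obtain ⟨b, hpb, hb⟩ := exists_Ico_subset_of_mem_nhds hV
    ⟨lower 1 one_pos le_rfl, lt_of_coord_lt (coord_lt_one p hp)⟩
  obtain ⟨y, hpy, hyb⟩ := exists_between (coord_lt_of_lt hpb hp)
  have hy : 0 < y := (coord_nonneg p).trans_lt hpy
  exact ⟨lower y hy (hyb.le.trans (coord_le_one b)),
    hb ⟨(lt_of_coord_lt hpy).le, lt_of_coord_lt hyb⟩, rfl⟩

lemma nhds_DAY (u : DAY) :
    𝓝 u = comap (fun q : DAY => coord q) (𝓝[≥] coord u) := by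
  have hu : arrow u = true := u.2
  have hbasis : (𝓝 u).HasBasis (fun b => u.1 < b) fun b => Subtype.val ⁻¹' Ico u.1 b := by
    rw [nhds_subtype, nhds_eq_nhdsGE hu]
    exact (nhdsGE_basis_of_exists_gt
      ⟨lower 1 one_pos le_rfl, lt_of_coord_lt (coord_lt_one _ hu)⟩).comap _
  refine hbasis.ext ((nhdsGE_basis_Ico _).comap _) (fun b hub => ?_) fun a ha => ?_
  · refine ⟨coord b, coord_lt_of_lt hub hu, fun q hq => ⟨?_, lt_of_coord_lt hq.2⟩⟩
    exact (le_iff_coord_le_of_arrow hu q.2).2 hq.1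
  · have hm : 0 < min a 1 := lt_min ((coord_nonneg _).trans_lt ha) one_pos
    refine ⟨lower (min a 1) hm (min_le_right _ _), lt_of_coord_lt (lt_min ha (coord_lt_one _ hu)),
      fun q hq => ⟨coord_mono hq.1, (coord_lt_of_lt hq.2 q.2).trans_le (min_le_left _ _)⟩⟩

theorem continuous_DAYmul : Continuous (fun p : DAY × DAY => DAYmul p.1 p.2) := by
  refine continuous_iff_continuousAt.2 fun ⟨u, v⟩ => ?_
  rw [ContinuousAt, nhds_DAY, tendsto_comap_iff, nhds_prod_eq, nhds_DAY u, nhds_DAY v,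
    prod_comap_comap_eq]
  exact ((Int.tendsto_fract_nhdsGE _).comp (tendsto_add_nhdsGE_prod _ _)).comp tendsto_comap

end DA

-- "`Y` is a remainder of `X`": `Z` is compact Hausdorff, `X` is dense in `Z` and `Y = Z \ X`.
/-- the two-arrows space `Z = X ∪ Y` is a Hausdorff compactification of the
Sorgenfrey-like arrow `X` (i.e. `Z` is compact Hausdorff and `X` is dense in it), `Y` is
the corresponding remainder `Z \ X`, and addition modulo 1 is jointly continuous on `Y`,
so `Y` admits a structure of a paratopological group. -/
theorem stmt8 :
    CompactSpace DA ∧ T2Space DA ∧ Dense DAX ∧ DAY = DAXᶜ ∧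
      Continuous (fun p : DAY × DAY => DAYmul p.1 p.2) := by
  refine ⟨DA.compactSpace, inferInstance, DA.dense_DAX, ?_, DA.continuous_DAYmul⟩
  ext p
  simp [DAX, DAY]
end

section
/- If bX is a Hausdorff compactification of X and the remainder Y = bX \ X fails the Baire property, witnessed by open sets U_n of Y with ⋂U_n not dense in Y, and V_n are open in bX with U_n = V_n ∩ Y, then there is a non-empty open U ⊆ bX with (⋂V_n) ∩ U ⊆ X, and the set (⋂V_n) ∩ U is a Čech-complete subspace of X. -/
open Set

universe u

/-- A Tychonoff space is Čech-complete if it embeds densely into a compact Hausdorff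
space as a Gδ subset. -/
def CechComplete (X : Type u) [TopologicalSpace X] : Prop :=
  ∃ (B : Type u) (tB : TopologicalSpace B) (e : X → B),
    CompactSpace B ∧ T2Space B ∧ Topology.IsEmbedding e ∧ DenseRange e ∧ IsGδ (Set.range e)

/-- The closure of `S` is a compactification in which `S` is still a Gδ. -/
theorem IsGδ.cechComplete {B : Type u} [TopologicalSpace B] [CompactSpace B] [T2Space B]
    {S : Set B} (hS : IsGδ S) : CechComplete S := by
  refine ⟨closure S, inferInstance, inclusion subset_closure,
    isCompact_iff_compactSpace.mp isClosed_closure.isCompact, inferInstance,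
    .inclusion _, (denseRange_inclusion_iff _).2 subset_rfl, ?_⟩
  rw [range_inclusion]
  exact hS.preimage continuous_subtype_val

theorem exists_isOpen_nonempty_disjoint_of_not_dense {B : Type*} [TopologicalSpace B]
    {Y : Set B} {T : Set Y} (hT : ¬ Dense T) :
    ∃ W : Set B, IsOpen W ∧ W.Nonempty ∧ Disjoint (Subtype.val ⁻¹' W) T := by
  rw [dense_iff_inter_open] at hT
  push Not at hT
  obtain ⟨O, hO, ⟨y, hyO⟩, hOT⟩ := hT
  obtain ⟨W, hW, rfl⟩ := isOpen_induced_iff.mp hO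
  exact ⟨W, hW, ⟨y, hyO⟩, disjoint_iff_inter_eq_empty.2 hOT⟩

theorem stmt16_general {X B : Type u} [TopologicalSpace X]
    [TopologicalSpace B] [CompactSpace B] [T2Space B]
    (e : X → B)
    (U : ℕ → Set ((Set.range e)ᶜ : Set B))
    (hnd : ¬ Dense (⋂ n, U n))
    (V : ℕ → Set B) (hV : ∀ n, IsOpen (V n))
    (hUV : ∀ n, U n = Subtype.val ⁻¹' V n) :
    ∃ W : Set B, IsOpen W ∧ W.Nonempty ∧ (⋂ n, V n) ∩ W ⊆ Set.range e ∧
      CechComplete (((⋂ n, V n) ∩ W : Set B)) := by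
  obtain ⟨W, hW, hWne, hWU⟩ := exists_isOpen_nonempty_disjoint_of_not_dense hnd
  refine ⟨W, hW, hWne, fun x ⟨hxV, hxW⟩ => ?_,
    ((IsGδ.iInter_of_isOpen hV).inter hW.isGδ).cechComplete⟩
  by_contra hx
  have hxU : (⟨x, hx⟩ : ((Set.range e)ᶜ : Set B)) ∈ ⋂ n, U n :=
    mem_iInter.2 fun n => (hUV n).symm ▸ mem_iInter.1 hxV n
  exact hWU.ne_of_mem hxW hxU rfl

/-- if `bX` is a Hausdorff compactification of `X` and the remainder
`Y = bX \ X` fails the Baire property, witnessed by dense open sets `U n` of `Y` whose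
intersection is not dense in `Y`, where `U n = V n ∩ Y` for open `V n ⊆ bX`, then there
is a nonempty open `W ⊆ bX` with `(⋂ n, V n) ∩ W ⊆ X`, and `(⋂ n, V n) ∩ W` is a
Čech-complete subspace. -/
theorem stmt16 {X B : Type u} [TopologicalSpace X] [T35Space X]
    [TopologicalSpace B] [CompactSpace B] [T2Space B]
    (e : X → B) (he : Topology.IsEmbedding e) (hd : DenseRange e)
    (U : ℕ → Set ((Set.range e)ᶜ : Set B))
    (hU : ∀ n, IsOpen (U n) ∧ Dense (U n)) (hnd : ¬ Dense (⋂ n, U n))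
    (V : ℕ → Set B) (hV : ∀ n, IsOpen (V n))
    (hUV : ∀ n, U n = Subtype.val ⁻¹' V n) :
    ∃ W : Set B, IsOpen W ∧ W.Nonempty ∧ (⋂ n, V n) ∩ W ⊆ Set.range e ∧
      CechComplete (((⋂ n, V n) ∩ W : Set B)) :=
  stmt16_general e U hnd V hV hUV
end
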